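/- Let M be a nonnegative σ-finite measure on (0,1] with ∫ u M(du) < ∞. Then for all θ₁, θ₂, y₁, y₂ ≥ 0, both of the following integrals converge absolutely and are equal: ∫ ( e^{θ₁(1−u)y₁ + θ₂(y₂ + u y₁)} + e^{θ₁(y₁ + u y₂) + θ₂(1−u)y₂} − 2 e^{θ₁ y₁ + θ₂ y₂} ) M(du) = ∫ ( e^{((1−u)θ₁ + u θ₂) y₁ + θ₂ y₂} + e^{θ₁ y₁ + (u θ₁ + (1−u) θ₂) y₂} − 2 e^{θ₁ y₁ + θ₂ y₂} ) M(du). (This is the duality, with duality function e^{θ₁y₁+θ₂y₂}, between the two-site mass-redistribution generator with redistribution measure M acting on the mass variables (y₁,y₂) and the corresponding hidden-parameter generator acting on (θ₁,θ₂); taking M(du) = du/u gives the duality between the continuous harmonic process and its hidden-parameter model.) -/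
import Mathlib


open MeasureTheory Real Set

lemma abs_exp_sub_one_le' (x : ℝ) : |Real.exp x - 1| ≤ |x| * Real.exp |x| := by
  rcases le_or_gt 0 x with h | h
  · rw [abs_of_nonneg h, abs_of_nonneg (by nlinarith [Real.one_le_exp h] : (0:ℝ) ≤ Real.exp x - 1)]
    have hid : Real.exp x * Real.exp (-x) = 1 := by
      rw [← Real.exp_add]; simp
    nlinarith [Real.add_one_le_exp (-x), Real.exp_pos x, hid]
  · rw [abs_of_neg h, abs_of_nonpos (by nlinarith [Real.exp_lt_one_iff.mpr h] : Real.exp x - 1 ≤ 0)]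
    nlinarith [Real.add_one_le_exp x, Real.one_le_exp (by linarith : (0:ℝ) ≤ -x)]

lemma exp_shift_bound (E c u : ℝ) (hu0 : 0 ≤ u) (hu1 : u ≤ 1) :
    |Real.exp (E + u * c) - Real.exp E| ≤ Real.exp E * (|c| * Real.exp |c|) * u := by
  have h1 : Real.exp (E + u * c) - Real.exp E = Real.exp E * (Real.exp (u * c) - 1) := by
    rw [Real.exp_add]; ring
  rw [h1, abs_mul, abs_of_nonneg (Real.exp_pos E).le]
  have h2 : |Real.exp (u * c) - 1| ≤ |u * c| * Real.exp |u * c| := abs_exp_sub_one_le' _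
  have h3 : |u * c| = u * |c| := by rw [abs_mul, abs_of_nonneg hu0]
  have h4 : Real.exp |u * c| ≤ Real.exp |c| := by
    apply Real.exp_le_exp.mpr
    rw [h3]
    nlinarith [abs_nonneg c]
  have h5 : |Real.exp (u * c) - 1| ≤ u * |c| * Real.exp |c| := by
    calc |Real.exp (u * c) - 1| ≤ |u * c| * Real.exp |u * c| := h2
    _ ≤ u * |c| * Real.exp |c| := by
        have h4' : Real.exp (u * |c|) ≤ Real.exp |c| := h3 ▸ h4
        rw [h3]; exact mul_le_mul_of_nonneg_left h4' (by positivity)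
  have := mul_le_mul_of_nonneg_left h5 (Real.exp_pos E).le
  nlinarith [Real.exp_pos E]

/-- Duality, with duality function `e^{θ₁y₁+θ₂y₂}`, between the two-site
mass-redistribution generator with redistribution measure `M` (acting on the mass variables
`(y₁,y₂)`) and the corresponding hidden-parameter generator (acting on `(θ₁,θ₂)`). -/
theorem mass_redistribution_duality (M : Measure ℝ) [SigmaFinite M]
    (hsupp : M (Set.Ioc (0 : ℝ) 1)ᶜ = 0)
    (hmom : ∫⁻ u, ENNReal.ofReal u ∂M < ⊤)
    (θ₁ θ₂ y₁ y₂ : ℝ) (hθ₁ : 0 ≤ θ₁) (hθ₂ : 0 ≤ θ₂) (hy₁ : 0 ≤ y₁) (hy₂ : 0 ≤ y₂) :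
    Integrable (fun u : ℝ =>
      Real.exp (θ₁ * (1 - u) * y₁ + θ₂ * (y₂ + u * y₁)) +
      Real.exp (θ₁ * (y₁ + u * y₂) + θ₂ * (1 - u) * y₂) -
      2 * Real.exp (θ₁ * y₁ + θ₂ * y₂)) M ∧
    Integrable (fun u : ℝ =>
      Real.exp (((1 - u) * θ₁ + u * θ₂) * y₁ + θ₂ * y₂) +
      Real.exp (θ₁ * y₁ + (u * θ₁ + (1 - u) * θ₂) * y₂) -
      2 * Real.exp (θ₁ * y₁ + θ₂ * y₂)) M ∧
    (∫ u, (Real.exp (θ₁ * (1 - u) * y₁ + θ₂ * (y₂ + u * y₁)) +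
           Real.exp (θ₁ * (y₁ + u * y₂) + θ₂ * (1 - u) * y₂) -
           2 * Real.exp (θ₁ * y₁ + θ₂ * y₂)) ∂M)
      = ∫ u, (Real.exp (((1 - u) * θ₁ + u * θ₂) * y₁ + θ₂ * y₂) +
              Real.exp (θ₁ * y₁ + (u * θ₁ + (1 - u) * θ₂) * y₂) -
              2 * Real.exp (θ₁ * y₁ + θ₂ * y₂)) ∂M := by
  set E : ℝ := θ₁ * y₁ + θ₂ * y₂ with hE
  set c₁ : ℝ := (θ₂ - θ₁) * y₁ with hc₁
  set c₂ : ℝ := (θ₁ - θ₂) * y₂ with hc₂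
  -- the two integrands are equal pointwise
  have heq : (fun u : ℝ =>
      Real.exp (θ₁ * (1 - u) * y₁ + θ₂ * (y₂ + u * y₁)) +
      Real.exp (θ₁ * (y₁ + u * y₂) + θ₂ * (1 - u) * y₂) -
      2 * Real.exp (θ₁ * y₁ + θ₂ * y₂)) = (fun u : ℝ =>
      Real.exp (((1 - u) * θ₁ + u * θ₂) * y₁ + θ₂ * y₂) +
      Real.exp (θ₁ * y₁ + (u * θ₁ + (1 - u) * θ₂) * y₂) -
      2 * Real.exp (θ₁ * y₁ + θ₂ * y₂)) := by
    funext u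
    have e1 : θ₁ * (1 - u) * y₁ + θ₂ * (y₂ + u * y₁)
        = ((1 - u) * θ₁ + u * θ₂) * y₁ + θ₂ * y₂ := by ring
    have e2 : θ₁ * (y₁ + u * y₂) + θ₂ * (1 - u) * y₂
        = θ₁ * y₁ + (u * θ₁ + (1 - u) * θ₂) * y₂ := by ring
    rw [e1, e2]
  -- rewrite first integrand in shift form
  have hform : (fun u : ℝ =>
      Real.exp (θ₁ * (1 - u) * y₁ + θ₂ * (y₂ + u * y₁)) +
      Real.exp (θ₁ * (y₁ + u * y₂) + θ₂ * (1 - u) * y₂) -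
      2 * Real.exp (θ₁ * y₁ + θ₂ * y₂)) = (fun u : ℝ =>
      Real.exp (E + u * c₁) + Real.exp (E + u * c₂) - 2 * Real.exp E) := by
    funext u
    have e1 : θ₁ * (1 - u) * y₁ + θ₂ * (y₂ + u * y₁) = E + u * c₁ := by
      rw [hE, hc₁]; ring
    have e2 : θ₁ * (y₁ + u * y₂) + θ₂ * (1 - u) * y₂ = E + u * c₂ := by
      rw [hE, hc₂]; ring
    rw [e1, e2, hE]
  have hae : ∀ᵐ u ∂M, u ∈ Set.Ioc (0 : ℝ) 1 := by
    rw [MeasureTheory.ae_iff]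
    exact hsupp
  set C : ℝ := Real.exp E * (|c₁| * Real.exp |c₁|) + Real.exp E * (|c₂| * Real.exp |c₂|)
    with hC
  have hC0 : 0 ≤ C := by positivity
  -- the dominating function C * u is integrable
  have hgint : Integrable (fun u : ℝ => C * u) M := by
    refine ⟨(measurable_const.mul measurable_id).aestronglyMeasurable, ?_⟩
    rw [MeasureTheory.hasFiniteIntegral_iff_norm]
    have hcong : ∫⁻ u, ENNReal.ofReal ‖C * u‖ ∂M
        = ∫⁻ u, ENNReal.ofReal C * ENNReal.ofReal u ∂M := by
      refine lintegral_congr_ae (hae.mono fun u hu => ?_)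
      simp only
      rw [← ENNReal.ofReal_mul hC0]
      congr 1
      rw [Real.norm_eq_abs, abs_mul, abs_of_nonneg hC0, abs_of_nonneg hu.1.le]
    rw [hcong, lintegral_const_mul _ ENNReal.measurable_ofReal]
    exact ENNReal.mul_lt_top ENNReal.ofReal_lt_top hmom
  have hmeas : AEStronglyMeasurable (fun u : ℝ =>
      Real.exp (E + u * c₁) + Real.exp (E + u * c₂) - 2 * Real.exp E) M := by
    apply Continuous.aestronglyMeasurable
    continuity
  have hbound : ∀ᵐ u ∂M, ‖Real.exp (E + u * c₁) + Real.exp (E + u * c₂) - 2 * Real.exp E‖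
      ≤ C * u := by
    refine hae.mono fun u hu => ?_
    have b1 := exp_shift_bound E c₁ u hu.1.le hu.2
    have b2 := exp_shift_bound E c₂ u hu.1.le hu.2
    rw [Real.norm_eq_abs]
    have habs : |Real.exp (E + u * c₁) + Real.exp (E + u * c₂) - 2 * Real.exp E|
        ≤ |Real.exp (E + u * c₁) - Real.exp E| + |Real.exp (E + u * c₂) - Real.exp E| := by
      have : Real.exp (E + u * c₁) + Real.exp (E + u * c₂) - 2 * Real.exp E
          = (Real.exp (E + u * c₁) - Real.exp E) + (Real.exp (E + u * c₂) - Real.exp E) := by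
        ring
      rw [this]
      exact abs_add_le _ _
    rw [hC]
    nlinarith
  have hint1 : Integrable (fun u : ℝ =>
      Real.exp (E + u * c₁) + Real.exp (E + u * c₂) - 2 * Real.exp E) M :=
    Integrable.mono' hgint hmeas hbound
  rw [hform]
  refine ⟨hint1, ?_, ?_⟩
  · rw [← heq, hform]; exact hint1
  · rw [← heq, hform]
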